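/- Let A be a nonzero commutative unital ℂ-algebra of at most countable dimension over ℂ which is an integral domain, and let (f_n)_{n ∈ ℕ} be a countable family of nonzero elements of A. Then there exists a ℂ-algebra homomorphism φ : A → ℂ such that φ(f_n) ≠ 0 for all n ∈ ℕ. -/

import Mathlib

/-!
Inverting the countably many `f n` keeps the algebra nonzero (as `A` is a domain) and of countable
dimension over `ℂ`. Any residue field `K` of the localization then has countable dimension too,
so it is algebraic over `ℂ`: a transcendental `x` would give the uncountable family
`(x - a)⁻¹`, `a ∈ ℂ`, of linearly independent elements. As `ℂ` is algebraically closed, `K = ℂ`,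
and the quotient map is the required character, under which the units `f n` cannot vanish.
-/

open Cardinal Submodule

universe u

theorem Submonoid.countable_closure {M : Type*} [Monoid M] {s : Set M} (hs : s.Countable) :
    (closure s : Set M).Countable := by
  have := hs.to_subtype
  rw [closure_eq_image_prod, ← Set.range_list_map_coe]
  exact (Set.countable_range _).image _

theorem Module.rank_le_aleph0_of_span_eq_top {R M : Type*} [Ring R] [StrongRankCondition R]
    [AddCommGroup M] [Module R M] {s : Set M} (hs : s.Countable) (hspan : span R s = ⊤) :
    Module.rank R M ≤ ℵ₀ := by
  have := hs.to_subtype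
  calc Module.rank R M = Module.rank R (span R s) := by rw [hspan, rank_top]
    _ ≤ #s := rank_span_le s
    _ ≤ ℵ₀ := mk_le_aleph0

theorem IsLocalization.span_iUnion_image_mk'_eq_top {R A : Type*} (L : Type*) [CommSemiring R]
    [CommRing A] [Algebra R A] [CommRing L] [Algebra A L] [Algebra R L] [IsScalarTower R A L]
    (S : Submonoid A) [IsLocalization S L] {s : Set A} (hspan : span R s = ⊤) :
    span R (⋃ t : S, (fun a ↦ mk' L a t) '' s) = ⊤ := by
  refine eq_top_iff'.2 fun x ↦ ?_
  obtain ⟨⟨a, t⟩, rfl⟩ := mk'_surjective S x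
  let φ : A →ₗ[R] L :=
    LinearMap.mulLeft R (mk' L 1 t) ∘ₗ (IsScalarTower.toAlgHom R A L).toLinearMap
  have hφ (b : A) : φ b = mk' L b t := by
    simp [φ, mk'_eq_mul_mk'_one b t, mul_comm]
  have ha : φ a ∈ span R (φ '' s) := apply_mem_span_image_of_mem_span φ (hspan ▸ mem_top)
  rw [hφ] at ha
  refine span_mono ?_ ha
  rintro _ ⟨b, hb, rfl⟩
  exact Set.mem_iUnion.2 ⟨t, b, hb, (hφ b).symm⟩

theorem Algebra.IsAlgebraic.of_rank_lt_cardinalMk {F E : Type u} [Field F] [Field E] [Algebra F E]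
    (h : Module.rank F E < #F) : Algebra.IsAlgebraic F E := by
  refine ⟨fun x ↦ of_not_not fun hx ↦ h.not_ge ?_⟩
  exact (Transcendental.linearIndependent_sub_inv hx).cardinal_le_rank

theorem exists_algHom_of_rank_lt_cardinalMk {F B : Type u} [Field F] [IsAlgClosed F] [CommRing B]
    [Nontrivial B] [Algebra F B] (h : Module.rank F B < #F) : Nonempty (B →ₐ[F] F) := by
  obtain ⟨m, hm⟩ := Ideal.exists_maximal B
  let := Ideal.Quotient.field m
  have hrank : Module.rank F (B ⧸ m) < #F :=
    ((Ideal.Quotient.mkₐ F m).toLinearMap.rank_le_of_surjective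
      (Ideal.Quotient.mkₐ_surjective F m)).trans_lt h
  have := Algebra.IsAlgebraic.of_rank_lt_cardinalMk hrank
  let e : F ≃ₐ[F] B ⧸ m := AlgEquiv.ofBijective (Algebra.ofId F _)
    IsAlgClosed.algebraMap_bijective_of_isIntegral
  exact ⟨e.symm.toAlgHom.comp (Ideal.Quotient.mkₐ F m)⟩

/-- Let `A` be a nonzero commutative unital `ℂ`-algebra of at most countable dimension over `ℂ`
which is an integral domain, and let `(f_n)` be a countable family of nonzero elements of `A`.
Then there exists a `ℂ`-algebra homomorphism `φ : A → ℂ` with `φ (f n) ≠ 0` for all `n`. -/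
theorem exists_algHom_nonvanishing_of_countable_dimension
    (A : Type) [CommRing A] [Algebra ℂ A] [IsDomain A]
    (hcount : ∃ s : Set A, s.Countable ∧ Submodule.span ℂ s = ⊤)
    (f : ℕ → A) (hf : ∀ n, f n ≠ 0) :
    ∃ φ : A →ₐ[ℂ] ℂ, ∀ n, φ (f n) ≠ 0 := by
  obtain ⟨s, hs, hspan⟩ := hcount
  let S := Submonoid.closure (Set.range f)
  have hS : S ≤ nonZeroDivisors A := Submonoid.closure_le.2 <| by
    rintro _ ⟨n, rfl⟩
    exact mem_nonZeroDivisors_of_ne_zero (hf n)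
  have := IsLocalization.isDomain_localization hS
  have := (Submonoid.countable_closure (Set.countable_range f)).to_subtype
  have hrank : Module.rank ℂ (Localization S) < #ℂ := by
    refine (Module.rank_le_aleph0_of_span_eq_top (Set.countable_iUnion fun _ ↦ hs.image _)
      (IsLocalization.span_iUnion_image_mk'_eq_top _ S hspan)).trans_lt ?_
    simpa [mk_complex] using aleph0_lt_continuum
  obtain ⟨ψ⟩ := exists_algHom_of_rank_lt_cardinalMk hrank
  refine ⟨ψ.comp (IsScalarTower.toAlgHom ℂ A _), fun n ↦ ?_⟩
  have hfS : f n ∈ S := Submonoid.subset_closure ⟨n, rfl⟩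
  exact ((IsLocalization.map_units (Localization S) ⟨f n, hfS⟩).map ψ).ne_zero
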